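/- With σ₀ and σ as above (erasure channel E_{q,δ} applied to the A' system of a classical-quantum ensemble of pure states φ_u^{AA'}), the mutual information satisfies I(AU:B)_σ = (1−δ)·(S(A')_{σ₀} + S(A'|U)_{σ₀}), and I(U:B)_σ + I(A⟩BU)_σ = (1−δ)·S(A')_{σ₀} − δ·S(A'|U)_{σ₀}. -/

import Mathlib

open ComplexOrder

/-- Von Neumann entropy (in bits). -/
noncomputable def vN {ι : Type} [Fintype ι] [DecidableEq ι] (ρ : Matrix ι ι ℂ) : ℝ :=
  if h : ρ.IsHermitian then ∑ i, -(h.eigenvalues i * Real.logb 2 (h.eigenvalues i)) else 0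

/-!
The erasure channel makes `σ` block diagonal, `σ ≅ (1-δ)σ₀ ⊕ δ σ₀^{UA}`, and likewise
`σ^B ≅ (1-δ)σ₀^{A'} ⊕ δ`, so both entropies split along the blocks and the binary entropy
`h(δ)` cancels in each identity. Purity of the `φ_u` gives the remaining two inputs: writing
`σ₀ = W Wᴴ` with `Wᴴ W = diag p` shows `S(σ₀) = S(U) = H(p)`, and writing `σ₀^{UA} = Z Zᴴ`
with `Zᴴ Z = (σ₀^{UA'})ᵀ` (a Schmidt decomposition) shows `S(UA)_{σ₀} = S(UA')_{σ₀}`.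
Entropies are read off characteristic polynomials, where `Z Zᴴ` and `Zᴴ Z` agree up to
powers of `X`, i.e. up to zero eigenvalues, which carry no entropy.
-/

open Matrix Polynomial

noncomputable def negMulLogb (x : ℝ) : ℝ := -(x * Real.logb 2 x)

lemma negMulLogb_eq (x : ℝ) : negMulLogb x = Real.negMulLog x / Real.log 2 := by
  rw [negMulLogb, Real.negMulLog, Real.logb]
  ring

lemma negMulLogb_mul (x y : ℝ) :
    negMulLogb (x * y) = y * negMulLogb x + x * negMulLogb y := by
  simp only [negMulLogb_eq, Real.negMulLog_mul]
  ring

noncomputable def rootEntropy (f : ℂ[X]) : ℝ := (f.roots.map fun z => negMulLogb z.re).sum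

lemma rootEntropy_prod_X_sub_C {ι : Type*} [Fintype ι] (d : ι → ℝ) :
    rootEntropy (∏ i, (X - C (d i : ℂ))) = ∑ i, negMulLogb (d i) := by
  have h : ∏ i, (X - C (d i : ℂ)) =
      ((Finset.univ.val.map fun i => (d i : ℂ)).map (X - C ·)).prod := by
    rw [Multiset.map_map]
    rfl
  rw [rootEntropy, h, roots_multiset_prod_X_sub_C, Multiset.map_map, Finset.sum_eq_multiset_sum]
  simp

lemma rootEntropy_mul {f g : ℂ[X]} (hf : f ≠ 0) (hg : g ≠ 0) :
    rootEntropy (f * g) = rootEntropy f + rootEntropy g := by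
  rw [rootEntropy, roots_mul (mul_ne_zero hf hg), Multiset.map_add, Multiset.sum_add]
  rfl

lemma rootEntropy_X_pow_mul (k : ℕ) {f : ℂ[X]} (hf : f ≠ 0) :
    rootEntropy (X ^ k * f) = rootEntropy f := by
  rw [rootEntropy_mul (pow_ne_zero _ X_ne_zero) hf, rootEntropy, roots_X_pow]
  simp [negMulLogb, Multiset.map_nsmul, Multiset.sum_nsmul]

section VonNeumann
variable {ι κ α β : Type} [Fintype ι] [DecidableEq ι]

lemma Matrix.IsHermitian.vN_eq_sum {A : Matrix ι ι ℂ} (hA : A.IsHermitian) :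
    vN A = ∑ i, negMulLogb (hA.eigenvalues i) := by
  rw [vN, dif_pos hA]
  rfl

lemma Matrix.IsHermitian.vN_eq_rootEntropy {A : Matrix ι ι ℂ} (hA : A.IsHermitian) :
    vN A = rootEntropy A.charpoly := by
  rw [hA.charpoly_eq, RCLike.ofReal_eq_complex_ofReal, rootEntropy_prod_X_sub_C, hA.vN_eq_sum]

lemma vN_diagonal (d : ι → ℝ) : vN (diagonal fun i => (d i : ℂ)) = ∑ i, negMulLogb (d i) := by
  have hd : (diagonal fun i => (d i : ℂ)).IsHermitian :=
    isHermitian_diagonal_of_self_adjoint _ (by ext i; simp)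
  rw [hd.vN_eq_rootEntropy, charpoly_diagonal, rootEntropy_prod_X_sub_C]

lemma Matrix.IsHermitian.vN_real_smul {A : Matrix ι ι ℂ} (hA : A.IsHermitian) (c : ℝ) :
    vN (c • A) = c * vN A + A.trace.re * negMulLogb c := by
  rw [(hA.smul (IsSelfAdjoint.all c)).vN_eq_rootEntropy, ← cfc_const_mul_id c A hA.isSelfAdjoint,
    hA.charpoly_cfc_eq, RCLike.ofReal_eq_complex_ofReal, rootEntropy_prod_X_sub_C,
    hA.trace_eq_sum_eigenvalues, hA.vN_eq_sum]
  simp [negMulLogb_mul, Finset.sum_add_distrib, Finset.mul_sum, Finset.sum_mul, add_comm]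

lemma Matrix.IsHermitian.vN_transpose {A : Matrix ι ι ℂ} (hA : A.IsHermitian) : vN Aᵀ = vN A := by
  rw [hA.transpose.vN_eq_rootEntropy, charpoly_transpose, hA.vN_eq_rootEntropy]

lemma vN_mul_conjTranspose_comm [Fintype κ] [DecidableEq κ] (W : Matrix ι κ ℂ) :
    vN (W * Wᴴ) = vN (Wᴴ * W) := by
  rw [(isHermitian_mul_conjTranspose_self W).vN_eq_rootEntropy,
    (isHermitian_conjTranspose_mul_self W).vN_eq_rootEntropy,
    ← rootEntropy_X_pow_mul (Fintype.card κ) (W * Wᴴ).charpoly_monic.ne_zero, charpoly_mul_comm',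
    rootEntropy_X_pow_mul _ (Wᴴ * W).charpoly_monic.ne_zero]

lemma vN_reindex_fromBlocks [Fintype α] [DecidableEq α] [Fintype β] [DecidableEq β]
    (e : ι ≃ α ⊕ β) {A : Matrix α α ℂ} {D : Matrix β β ℂ}
    (hA : A.IsHermitian) (hD : D.IsHermitian) :
    vN (reindex e.symm e.symm (fromBlocks A 0 0 D)) = vN A + vN D := by
  have h : (reindex e.symm e.symm (fromBlocks A 0 0 D)).IsHermitian :=
    (hA.fromBlocks (by simp) hD).submatrix _
  rw [h.vN_eq_rootEntropy, charpoly_reindex, charpoly_fromBlocks_zero₁₂,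
    rootEntropy_mul A.charpoly_monic.ne_zero D.charpoly_monic.ne_zero,
    hA.vN_eq_rootEntropy, hD.vN_eq_rootEntropy]

end VonNeumann

section PartialTrace
variable {U A B : Type}

def partialTraceB [Fintype B] (ρ : Matrix (U × A × B) (U × A × B) ℂ) :
    Matrix (U × A) (U × A) ℂ :=
  of fun P P' => ∑ b, ρ (P.1, P.2, b) (P'.1, P'.2, b)

def partialTraceA [Fintype A] (ρ : Matrix (U × A × B) (U × A × B) ℂ) :
    Matrix (U × B) (U × B) ℂ :=
  of fun P P' => ∑ a, ρ (P.1, a, P.2) (P'.1, a, P'.2)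

def partialTraceUA [Fintype U] [Fintype A] (ρ : Matrix (U × A × B) (U × A × B) ℂ) :
    Matrix B B ℂ :=
  of fun b b' => ∑ u, ∑ a, ρ (u, a, b) (u, a, b')

def partialTraceAB [Fintype A] [Fintype B] (ρ : Matrix (U × A × B) (U × A × B) ℂ) :
    Matrix U U ℂ :=
  of fun u u' => ∑ x, ρ (u, x) (u', x)

lemma Matrix.IsHermitian.partialTraceB [Fintype B] {ρ : Matrix (U × A × B) (U × A × B) ℂ}
    (hρ : ρ.IsHermitian) : (partialTraceB ρ).IsHermitian := by
  ext P P'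
  simp [_root_.partialTraceB, star_sum, hρ.apply]

lemma Matrix.IsHermitian.partialTraceUA [Fintype U] [Fintype A]
    {ρ : Matrix (U × A × B) (U × A × B) ℂ} (hρ : ρ.IsHermitian) :
    (partialTraceUA ρ).IsHermitian := by
  ext b b'
  simp [_root_.partialTraceUA, star_sum, hρ.apply]

variable [Fintype U] [Fintype A] [Fintype B]

lemma trace_partialTraceB (ρ : Matrix (U × A × B) (U × A × B) ℂ) :
    (partialTraceB ρ).trace = ρ.trace := by
  simp [partialTraceB, trace, Fintype.sum_prod_type]

lemma trace_partialTraceUA (ρ : Matrix (U × A × B) (U × A × B) ℂ) :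
    (partialTraceUA ρ).trace = ρ.trace := by
  simp only [partialTraceUA, trace, diag, of_apply, Fintype.sum_prod_type]
  rw [Finset.sum_comm]
  exact Finset.sum_congr rfl fun u _ => Finset.sum_comm

end PartialTrace

section Erasure
variable {U A B : Type}

def erasureSplit (U A B : Type) : U × A × Option B ≃ (U × A × B) ⊕ (U × A) where
  toFun
    | (u, a, some b) => .inl (u, a, b)
    | (u, a, none) => .inr (u, a)
  invFun
    | .inl (u, a, b) => (u, a, some b)
    | .inr (u, a) => (u, a, none)
  left_inv := by rintro ⟨u, a, _ | b⟩ <;> rfl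
  right_inv := by rintro (⟨u, a, b⟩ | ⟨u, a⟩) <;> rfl

@[simp]
lemma erasureSplit_some (u : U) (a : A) (b : B) :
    erasureSplit U A B (u, a, some b) = .inl (u, a, b) :=
  rfl

@[simp]
lemma erasureSplit_none (u : U) (a : A) : erasureSplit U A B (u, a, none) = .inr (u, a) :=
  rfl

/-- `none : Option B` is the erasure flag `⊥`. -/
noncomputable def erasure [Fintype B] (δ : ℝ) (ρ : Matrix (U × A × B) (U × A × B) ℂ) :
    Matrix (U × A × Option B) (U × A × Option B) ℂ :=
  reindex (erasureSplit U A B).symm (erasureSplit U A B).symm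
    (fromBlocks ((1 - δ) • ρ) 0 0 (δ • partialTraceB ρ))

lemma partialTraceB_erasure [Fintype B] (δ : ℝ) (ρ : Matrix (U × A × B) (U × A × B) ℂ) :
    partialTraceB (erasure δ ρ) = partialTraceB ρ := by
  ext P P'
  simp [partialTraceB, erasure, Fintype.sum_option, ← Finset.mul_sum, ← add_mul]

lemma partialTraceAB_erasure [Fintype A] [Fintype B] (δ : ℝ)
    (ρ : Matrix (U × A × B) (U × A × B) ℂ) :
    partialTraceAB (erasure δ ρ) = partialTraceAB ρ := by
  ext u u'
  simp [partialTraceAB, partialTraceB, erasure, Fintype.sum_prod_type, Fintype.sum_option,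
    ← Finset.mul_sum, ← add_mul]

lemma partialTraceUA_erasure [Fintype U] [Fintype A] [Fintype B] (δ : ℝ)
    {ρ : Matrix (U × A × B) (U × A × B) ℂ} (htr : ρ.trace = 1) :
    partialTraceUA (erasure δ ρ) =
      reindex (Equiv.optionEquivSumPUnit B).symm (Equiv.optionEquivSumPUnit B).symm
        (fromBlocks ((1 - δ) • partialTraceUA ρ) 0 0 (diagonal fun _ => (δ : ℂ))) := by
  simp only [trace, diag, Fintype.sum_prod_type] at htr
  ext (_ | b) (_ | b') <;>
    simp [partialTraceUA, partialTraceB, erasure, Complex.real_smul, ← Finset.mul_sum, htr]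

variable [Fintype U] [Fintype A] [Fintype B] [DecidableEq B] {ρ : Matrix (U × A × B) (U × A × B) ℂ}

lemma vN_erasure [DecidableEq U] [DecidableEq A] (δ : ℝ) (hρ : ρ.IsHermitian)
    (htr : ρ.trace = 1) :
    vN (erasure δ ρ) = (1 - δ) * vN ρ + δ * vN (partialTraceB ρ)
      + negMulLogb (1 - δ) + negMulLogb δ := by
  rw [erasure, vN_reindex_fromBlocks _ (hρ.smul (.all _)) (hρ.partialTraceB.smul (.all _)),
    hρ.vN_real_smul, hρ.partialTraceB.vN_real_smul, trace_partialTraceB, htr]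
  simp only [Complex.one_re, one_mul]
  ring

lemma vN_partialTraceUA_erasure (δ : ℝ) (hρ : ρ.IsHermitian) (htr : ρ.trace = 1) :
    vN (partialTraceUA (erasure δ ρ)) = (1 - δ) * vN (partialTraceUA ρ)
      + negMulLogb (1 - δ) + negMulLogb δ := by
  rw [partialTraceUA_erasure δ htr,
    vN_reindex_fromBlocks _ (hρ.partialTraceUA.smul (.all _))
      (isHermitian_diagonal_of_self_adjoint _ (by ext; simp)),
    hρ.partialTraceUA.vN_real_smul, trace_partialTraceUA, htr, vN_diagonal (fun _ => δ)]
  simp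

end Erasure

lemma sum_mul_conj_eq_one {X : Type} [Fintype X] {v : X → ℂ}
    (hv : ∑ x, Complex.normSq (v x) = 1) : ∑ x, v x * starRingEnd ℂ (v x) = 1 := by
  simp_rw [Complex.mul_conj]
  exact_mod_cast hv

lemma ofReal_sqrt_mul_self {x : ℝ} (hx : 0 ≤ x) : (√x : ℂ) * (√x : ℂ) = x := by
  rw [← Complex.ofReal_mul, Real.mul_self_sqrt hx]

section ClassicalQuantum
variable {U A B : Type}

def cqState [DecidableEq U] (p : U → ℝ) (ψ : U → A × B → ℂ) :
    Matrix (U × A × B) (U × A × B) ℂ :=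
  of fun P P' => if P.1 = P'.1 then (p P.1 : ℂ) * (ψ P.1 P.2 * star (ψ P.1 P'.2)) else 0

noncomputable def cqFactor [DecidableEq U] (p : U → ℝ) (ψ : U → A × B → ℂ) :
    Matrix (U × A × B) U ℂ :=
  of fun P u => if P.1 = u then (√(p u) : ℂ) * ψ u P.2 else 0

lemma isHermitian_cqState [DecidableEq U] (p : U → ℝ) (ψ : U → A × B → ℂ) :
    (cqState p ψ).IsHermitian := by
  ext ⟨u, x⟩ ⟨u', x'⟩
  simp only [cqState, conjTranspose_apply, of_apply]
  split_ifs <;> simp_all [mul_comm]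

variable [DecidableEq U] {p : U → ℝ} (ψ : U → A × B → ℂ)

lemma cqState_eq_mul_conjTranspose [Fintype U] (hp : ∀ u, 0 ≤ p u) :
    cqState p ψ = cqFactor p ψ * (cqFactor p ψ)ᴴ := by
  ext ⟨u, x⟩ ⟨u', x'⟩
  rw [mul_apply, Fintype.sum_eq_single u fun v hv => by simp [cqFactor, Ne.symm hv]]
  by_cases h : u = u'
  · subst h
    simp [cqState, cqFactor, ← ofReal_sqrt_mul_self (hp u)]
    ring
  · simp [cqState, cqFactor, h, Ne.symm h]

lemma partialTraceAB_cqState [Fintype A] [Fintype B]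
    (hψ : ∀ u, ∑ x, Complex.normSq (ψ u x) = 1) :
    partialTraceAB (cqState p ψ) = diagonal fun u => (p u : ℂ) := by
  ext u u'
  by_cases h : u = u'
  · subst h
    simp [partialTraceAB, cqState, ← Finset.mul_sum, sum_mul_conj_eq_one (hψ u)]
  · simp [partialTraceAB, cqState, h]

variable [Fintype U] [Fintype A] [Fintype B]

lemma conjTranspose_mul_cqFactor (hψ : ∀ u, ∑ x, Complex.normSq (ψ u x) = 1)
    (hp : ∀ u, 0 ≤ p u) : (cqFactor p ψ)ᴴ * cqFactor p ψ = diagonal fun u => (p u : ℂ) := by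
  ext u u'
  rw [mul_apply, Fintype.sum_prod_type,
    Fintype.sum_eq_single u fun v hv => by simp [cqFactor, hv]]
  by_cases h : u = u'
  · subst h
    simp only [cqFactor, conjTranspose_apply, of_apply, if_pos, diagonal_apply_eq, star_mul',
      Complex.star_def, Complex.conj_ofReal]
    simp_rw [mul_mul_mul_comm, ofReal_sqrt_mul_self (hp u), ← Finset.mul_sum, mul_comm _ (ψ u _),
      sum_mul_conj_eq_one (hψ u), mul_one]
  · simp [cqFactor, h]

lemma vN_cqState [DecidableEq A] [DecidableEq B] (hψ : ∀ u, ∑ x, Complex.normSq (ψ u x) = 1)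
    (hp : ∀ u, 0 ≤ p u) : vN (cqState p ψ) = ∑ u, negMulLogb (p u) := by
  rw [cqState_eq_mul_conjTranspose ψ hp, vN_mul_conjTranspose_comm,
    conjTranspose_mul_cqFactor ψ hψ hp, vN_diagonal]

lemma trace_cqState (hψ : ∀ u, ∑ x, Complex.normSq (ψ u x) = 1) (hp : ∀ u, 0 ≤ p u) :
    (cqState p ψ).trace = ∑ u, (p u : ℂ) := by
  rw [cqState_eq_mul_conjTranspose ψ hp, trace_mul_comm, conjTranspose_mul_cqFactor ψ hψ hp,
    trace_diagonal]

lemma vN_partialTraceB_cqState [DecidableEq A] [DecidableEq B] (hp : ∀ u, 0 ≤ p u) :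
    vN (partialTraceB (cqState p ψ)) = vN (partialTraceA (cqState p ψ)) := by
  let Z : Matrix (U × A) (U × B) ℂ :=
    of fun P P' => if P.1 = P'.1 then (√(p P.1) : ℂ) * ψ P.1 (P.2, P'.2) else 0
  have hB : partialTraceB (cqState p ψ) = Z * Zᴴ := by
    ext ⟨u, a⟩ ⟨u', a'⟩
    rw [mul_apply, Fintype.sum_prod_type,
      Fintype.sum_eq_single u fun v hv => by simp [Z, Ne.symm hv]]
    by_cases h : u = u'
    · subst h
      simp only [partialTraceB, cqState, Z, of_apply, if_pos, conjTranspose_apply, star_mul',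
        Complex.star_def, Complex.conj_ofReal]
      refine Finset.sum_congr rfl fun b _ => ?_
      rw [← ofReal_sqrt_mul_self (hp u)]
      ring
    · simp [partialTraceB, cqState, Z, h, Ne.symm h]
  have hA : partialTraceA (cqState p ψ) = (Zᴴ * Z)ᵀ := by
    ext ⟨u, b⟩ ⟨u', b'⟩
    rw [transpose_apply, mul_apply, Fintype.sum_prod_type,
      Fintype.sum_eq_single u fun v hv => by simp [Z, hv]]
    by_cases h : u = u'
    · subst h
      simp only [partialTraceA, cqState, Z, of_apply, if_pos, conjTranspose_apply, star_mul',
        Complex.star_def, Complex.conj_ofReal]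
      refine Finset.sum_congr rfl fun a _ => ?_
      rw [← ofReal_sqrt_mul_self (hp u)]
      ring
    · simp [partialTraceA, cqState, Z, h]
  rw [hB, hA, (isHermitian_conjTranspose_mul_self Z).vN_transpose, vN_mul_conjTranspose_comm]

end ClassicalQuantum

theorem stmt19 (q : ℕ) (δ : ℝ)
    (U : Type) [Fintype U] [DecidableEq U]
    (p : U → ℝ) (hp : ∀ u, 0 ≤ p u) (hp1 : ∑ u, p u = 1)
    (ψ : U → (Fin q × Fin q) → ℂ) (hψ : ∀ u, ∑ x, Complex.normSq (ψ u x) = 1) :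
    let φ : U → Matrix (Fin q × Fin q) (Fin q × Fin q) ℂ :=
      fun u => Matrix.of fun x y => ψ u x * star (ψ u y)
    let σ0 : Matrix (U × Fin q × Fin q) (U × Fin q × Fin q) ℂ :=
      Matrix.of fun P P' =>
        if P.1 = P'.1 then (p P.1 : ℂ) * φ P.1 P.2 P'.2 else 0
    let σ : Matrix (U × Fin q × Option (Fin q)) (U × Fin q × Option (Fin q)) ℂ :=
      Matrix.of fun P P' =>
        match P.2.2, P'.2.2 with
        | some b, some b' => ((1 : ℂ) - (δ : ℂ)) * σ0 (P.1, P.2.1, b) (P'.1, P'.2.1, b')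
        | none, none => (δ : ℂ) * ∑ b : Fin q, σ0 (P.1, P.2.1, b) (P'.1, P'.2.1, b)
        | _, _ => 0
    let σU : Matrix U U ℂ :=
      Matrix.of fun u u' => ∑ x : Fin q × Option (Fin q), σ (u, x) (u', x)
    let σUA : Matrix (U × Fin q) (U × Fin q) ℂ :=
      Matrix.of fun P P' => ∑ ob : Option (Fin q), σ (P.1, P.2, ob) (P'.1, P'.2, ob)
    let σUB : Matrix (U × Option (Fin q)) (U × Option (Fin q)) ℂ :=
      Matrix.of fun P P' => ∑ a : Fin q, σ (P.1, a, P.2) (P'.1, a, P'.2)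
    let σB : Matrix (Option (Fin q)) (Option (Fin q)) ℂ :=
      Matrix.of fun ob ob' => ∑ u : U, ∑ a : Fin q, σ (u, a, ob) (u, a, ob')
    let σ0U : Matrix U U ℂ :=
      Matrix.of fun u u' => ∑ x : Fin q × Fin q, σ0 (u, x) (u', x)
    let σ0UA' : Matrix (U × Fin q) (U × Fin q) ℂ :=
      Matrix.of fun P P' => ∑ a : Fin q, σ0 (P.1, a, P.2) (P'.1, a, P'.2)
    let σ0A' : Matrix (Fin q) (Fin q) ℂ :=
      Matrix.of fun b b' => ∑ u : U, ∑ a : Fin q, σ0 (u, a, b) (u, a, b')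
    (vN σUA + vN σB - vN σ = (1 - δ) * (vN σ0A' + (vN σ0UA' - vN σ0U))) ∧
    ((vN σU + vN σB - vN σUB) + ((vN σUB - vN σU) - (vN σ - vN σU))
        = (1 - δ) * vN σ0A' - δ * (vN σ0UA' - vN σ0U)) := by
  intro φ σ0 σ σU σUA σUB σB σ0U σ0UA' σ0A'
  have hσ : σ = erasure δ σ0 := by
    ext ⟨u, a, _ | b⟩ ⟨u', a', _ | b'⟩ <;>
      simp [σ, erasure, partialTraceB, Complex.real_smul]
  have hσ0 : σ0 = cqState p ψ := rfl
  have hσU : σU = partialTraceAB σ := rfl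
  have hσUA : σUA = partialTraceB σ := rfl
  have hσB : σB = partialTraceUA σ := rfl
  have hσ0U : σ0U = partialTraceAB σ0 := rfl
  have hσ0UA' : σ0UA' = partialTraceA σ0 := rfl
  have hσ0A' : σ0A' = partialTraceUA σ0 := rfl
  have htr : (cqState p ψ).trace = 1 := by
    rw [trace_cqState ψ hψ hp, ← Complex.ofReal_sum, hp1, Complex.ofReal_one]
  have hσ0H := isHermitian_cqState p ψ
  rw [hσU, hσUA, hσB, hσ0U, hσ0UA', hσ0A', hσ, hσ0]
  rw [partialTraceAB_erasure, partialTraceB_erasure, vN_erasure δ hσ0H htr,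
    vN_partialTraceUA_erasure δ hσ0H htr, partialTraceAB_cqState ψ hψ, vN_diagonal,
    vN_cqState ψ hψ hp, vN_partialTraceB_cqState ψ hp]
  constructor <;> ring
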